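/- Let ω be a non-quasianalytic weight function and 1 ≤ p < ∞. If f ∈ O^{2m}_{n,ω,p}(ℝ^N) for some m, n ∈ ℕ, then with n' ≥ n from the weighted Morrey embedding there is a constant C' > 0 (independent of f) such that sup_{α} ‖e^{−n'ω} ∂^α f‖_∞ · exp(−m φ*(|α|/m)) ≤ C' · r_{2m,n,p}(f); hence O^{2m}_{n,ω,p}(ℝ^N) embeds continuously into O^m_{n',ω}(ℝ^N). -/

import Mathlib

open MeasureTheory Real ENNReal Filter

noncomputable section

abbrev Euc (N : ℕ) := EuclideanSpace ℝ (Fin N)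

/-- First-order partial derivative in direction `i`. -/
def pd {N : ℕ} (i : Fin N) (f : Euc N → ℂ) : Euc N → ℂ :=
  fun x => fderiv ℝ f x (EuclideanSpace.single i (1:ℝ))

def pdPow {N : ℕ} (i : Fin N) : ℕ → (Euc N → ℂ) → (Euc N → ℂ)
  | 0, f => f
  | n+1, f => pd i (pdPow i n f)

/-- Multi-index partial derivative `∂^α f`. -/
def mderiv {N : ℕ} (α : Fin N → ℕ) (f : Euc N → ℂ) : Euc N → ℂ :=
  (List.finRange N).foldr (fun i g => pdPow i (α i) g) f

/-- Length `|α|` of a multi-index. -/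
def msize {N : ℕ} (α : Fin N → ℕ) : ℕ := ∑ i, α i

/-- Weighted `L^p` norm `‖e^{w} g‖_p` (value in `ℝ≥0∞`). -/
def wLp {N : ℕ} (p : ℝ≥0∞) (w : Euc N → ℝ) (g : Euc N → ℂ) : ℝ≥0∞ :=
  eLpNorm (fun x => Real.exp (w x) * ‖g x‖) p volume

def youngConj (φ : ℝ → ℝ) (s : ℝ) : ℝ :=
  sSup {y | ∃ t ≥ 0, y = s * t - φ t}

/-- Young conjugate `φ*` of `φ_ω = ω ∘ exp`. -/
def phiStar (ω : ℝ → ℝ) (s : ℝ) : ℝ :=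
  youngConj (fun t => ω (Real.exp t)) s

/-- A non-quasianalytic weight function in the sense of Braun–Meise–Taylor. -/
structure IsWeightFun (ω : ℝ → ℝ) : Prop where
  continuous : ContinuousOn ω (Set.Ici 0)
  mono : MonotoneOn ω (Set.Ici 0)
  nonneg : ∀ t, 0 ≤ t → 0 ≤ ω t
  alpha : ∃ K ≥ 1, ∀ t ≥ 0, ω (2*t) ≤ K * (1 + ω t)
  beta : IntegrableOn (fun t => ω t / (1 + t^2)) (Set.Ici 1)
  gamma : ∃ a b : ℝ, 0 < b ∧ ∀ t ≥ 0, a + b * Real.log (1+t) ≤ ω t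
  delta : ConvexOn ℝ (Set.Ici 0) (fun t => ω (Real.exp t))
  vanish : ∀ t ∈ Set.Icc (0:ℝ) 1, ω t = 0

/-- The norm `r_{m,n,p}` of the space `O^m_{n,ω,p}(ℝ^N)`. -/
def rnorm {N : ℕ} (ω : ℝ → ℝ) (m : ℕ) (n : ℤ) (p : ℝ) (f : Euc N → ℂ) : ℝ≥0∞ :=
  (∑' α : Fin N → ℕ,
    (wLp (ENNReal.ofReal p) (fun x => -((n : ℝ) * ω ‖x‖)) (mderiv α f)) ^ p *
      ENNReal.ofReal (Real.exp (-((m : ℝ) * p * phiStar ω ((msize α : ℝ) / m))))) ^ (1/p)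


namespace OmAux

variable {N : ℕ}

/-- Smoothness shorthand (C^∞). -/
abbrev Sm {N : ℕ} (u : Euc N → ℂ) : Prop := ContDiff ℝ (⊤ : ℕ∞) u

lemma top_add_one_le : ((⊤ : ℕ∞) : WithTop ℕ∞) + 1 ≤ ((⊤ : ℕ∞) : WithTop ℕ∞) := by
  exact_mod_cast le_top (α := ℕ∞) (a := (⊤ : ℕ∞) + 1)

lemma one_le_top' : (1 : WithTop ℕ∞) ≤ ((⊤ : ℕ∞) : WithTop ℕ∞) := by
  exact_mod_cast le_top (α := ℕ∞) (a := (1 : ℕ∞))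

/-- unit coordinate vector -/
def sE {N : ℕ} (i : Fin N) : Euc N := EuclideanSpace.single i (1:ℝ)

lemma pd_smooth {u : Euc N → ℂ} (hu : Sm u) (i : Fin N) : Sm (pd i u) := by
  exact ((ContinuousLinearMap.apply ℝ ℂ (EuclideanSpace.single i (1:ℝ))).contDiff).comp
    (hu.fderiv_right top_add_one_le)

lemma pd_comm {u : Euc N → ℂ} (hu : Sm u) (i j : Fin N) : pd i (pd j u) = pd j (pd i u) := by
  funext x
  have hd : ∀ y, HasFDerivAt u (fderiv ℝ u y) y := fun y =>
    ((hu.differentiable (by simp)) y).hasFDerivAt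
  have hfd : DifferentiableAt ℝ (fderiv ℝ u) x :=
    ((hu.fderiv_right top_add_one_le).differentiable (by simp)).differentiableAt
  have hsymm := second_derivative_symmetric hd hfd.hasFDerivAt
  have hcomp : ∀ (v : Euc N), fderiv ℝ (fun y => fderiv ℝ u y v) x
      = (fderiv ℝ (fderiv ℝ u) x).flip v := by
    intro v
    have h := fderiv_clm_apply (c := fderiv ℝ u) (u := fun _ => v) hfd (differentiableAt_const v)
    simpa using h
  show fderiv ℝ (fun y => fderiv ℝ u y (EuclideanSpace.single j 1)) x (EuclideanSpace.single i 1)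
    = fderiv ℝ (fun y => fderiv ℝ u y (EuclideanSpace.single i 1)) x (EuclideanSpace.single j 1)
  rw [hcomp, hcomp]
  exact hsymm _ _

/-- iterated first-order derivatives along a list of directions -/
def pdL {N : ℕ} (s : List (Fin N)) (u : Euc N → ℂ) : Euc N → ℂ :=
  s.foldr (fun i g => pd i g) u

@[simp] lemma pdL_nil (u : Euc N → ℂ) : pdL [] u = u := rfl

@[simp] lemma pdL_cons (i : Fin N) (s : List (Fin N)) (u : Euc N → ℂ) :
    pdL (i :: s) u = pd i (pdL s u) := rfl

lemma pdL_smooth {u : Euc N → ℂ} (hu : Sm u) : ∀ s : List (Fin N), Sm (pdL s u)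
  | [] => hu
  | i :: s => pd_smooth (pdL_smooth hu s) i

lemma pdL_append (s t : List (Fin N)) (u : Euc N → ℂ) :
    pdL (s ++ t) u = pdL s (pdL t u) := by
  simp [pdL, List.foldr_append]

lemma pdL_perm {u : Euc N → ℂ} (hu : Sm u) {s t : List (Fin N)} (h : s.Perm t) :
    pdL s u = pdL t u := by
  induction h with
  | nil => rfl
  | cons x h ih => simp [ih]
  | swap x y l => simp [pd_comm (pdL_smooth hu l) x y]
  | trans h₁ h₂ ih₁ ih₂ => rw [ih₁, ih₂]

lemma pdL_replicate (i : Fin N) (u : Euc N → ℂ) : ∀ k, pdL (List.replicate k i) u = pdPow i k u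
  | 0 => rfl
  | k+1 => by simp [List.replicate_succ, pdPow, pdL_replicate i u k]

/-- canonical list of a multi-index -/
def canon {N : ℕ} (γ : Fin N → ℕ) : List (Fin N) :=
  (List.finRange N).flatMap (fun i => List.replicate (γ i) i)

lemma mderiv_eq_pdL (γ : Fin N → ℕ) (f : Euc N → ℂ) : mderiv γ f = pdL (canon γ) f := by
  unfold mderiv canon
  generalize (List.finRange N) = l
  induction l with
  | nil => rfl
  | cons i l ih =>
      show pdPow i (γ i) (l.foldr (fun i g => pdPow i (γ i) g) f) = _
      rw [List.flatMap_cons, pdL_append, pdL_replicate, ih]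

lemma count_canon (γ : Fin N → ℕ) (j : Fin N) : (canon γ).count j = γ j := by
  classical
  rw [canon, List.count_flatMap]
  have h : (List.map (List.count j ∘ fun i => List.replicate (γ i) i) (List.finRange N))
      = List.map (fun i => if i = j then γ i else 0) (List.finRange N) := by
    apply List.map_congr_left
    intro i _
    simp [Function.comp, List.count_replicate]
  rw [h, ← Fin.sum_univ_def]
  simp

lemma mderiv_smooth {f : Euc N → ℂ} (hf : Sm f) (γ : Fin N → ℕ) : Sm (mderiv γ f) := by
  rw [mderiv_eq_pdL]; exact pdL_smooth hf _

lemma pdL_mderiv {f : Euc N → ℂ} (hf : Sm f) (s : List (Fin N)) (α : Fin N → ℕ) :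
    pdL s (mderiv α f) = mderiv (fun j => α j + s.count j) f := by
  classical
  rw [mderiv_eq_pdL, mderiv_eq_pdL, ← pdL_append]
  apply pdL_perm hf
  rw [List.perm_iff_count]
  intro j
  simp [List.count_append, count_canon]
  ring

lemma sum_count (s : List (Fin N)) : (∑ j, s.count j) = s.length := by
  classical
  induction s with
  | nil => simp
  | cons a s ih =>
      simp only [List.count_cons, List.length_cons]
      rw [Finset.sum_add_distrib, ih]
      simp

lemma msize_count (s : List (Fin N)) (α : Fin N → ℕ) :
    msize (fun j => α j + s.count j) = msize α + s.length := by
  classical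
  unfold msize
  rw [Finset.sum_add_distrib, sum_count]


/-! ### 1D Fundamental theorem bound -/

lemma line_hasDerivAt {u : Euc N → ℂ} (hu : Sm u) (x v : Euc N) (t : ℝ) :
    HasDerivAt (fun s : ℝ => u (x + s • v)) (fderiv ℝ u (x + t • v) v) t := by
  have h1 : HasDerivAt (fun s : ℝ => x + s • v) v t := by
    simpa using ((hasDerivAt_id t).smul_const v).const_add x
  exact (((hu.differentiable (by simp)) (x + t • v)).hasFDerivAt).comp_hasDerivAt t h1

lemma line_cont {u : Euc N → ℂ} (hu : Continuous u) (x v : Euc N) :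
    Continuous (fun t : ℝ => u (x + t • v)) :=
  hu.comp (continuous_const.add (continuous_id.smul continuous_const))

lemma oneD {u : Euc N → ℂ} (hu : Sm u) (i : Fin N) (x : Euc N) :
    ‖u x‖ ≤ (∫ t in (0:ℝ)..1, ‖u (x + t • sE i)‖)
      + ∫ t in (0:ℝ)..1, ‖pd i u (x + t • sE i)‖ := by
  set v := sE i with hv
  set g : ℝ → ℂ := fun t => u (x + t • v) with hg
  set g' : ℝ → ℂ := fun t => pd i u (x + t • v) with hg'
  have hder : ∀ t : ℝ, HasDerivAt g (g' t) t := fun t => line_hasDerivAt hu x v t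
  have hgc : Continuous g := line_cont (hu.continuous) x v
  have hg'c : Continuous g' := line_cont ((pd_smooth hu i).continuous) x v
  have hg0 : g 0 = u x := by simp [hg]
  set C : ℝ := ∫ t in (0:ℝ)..1, ‖g' t‖ with hC
  have key : ∀ t ∈ Set.Icc (0:ℝ) 1, ‖g 0‖ ≤ ‖g t‖ + C := by
    intro t ht
    have hfund : ∫ s in (0:ℝ)..t, g' s = g t - g 0 :=
      intervalIntegral.integral_eq_sub_of_hasDerivAt (fun s _ => hder s)
        (hg'c.intervalIntegrable _ _)
    have h1 : ‖g t - g 0‖ ≤ C := by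
      rw [← hfund]
      calc ‖∫ s in (0:ℝ)..t, g' s‖ ≤ ∫ s in (0:ℝ)..t, ‖g' s‖ :=
            intervalIntegral.norm_integral_le_integral_norm ht.1
        _ ≤ C := by
            apply intervalIntegral.integral_mono_interval le_rfl ht.1 ht.2
            · exact Filter.Eventually.of_forall fun s => norm_nonneg _
            · exact (hg'c.norm).intervalIntegrable _ _
    calc ‖g 0‖ = ‖g t - (g t - g 0)‖ := by ring_nf
      _ ≤ ‖g t‖ + ‖g t - g 0‖ := norm_sub_le _ _
      _ ≤ ‖g t‖ + C := by linarith
  have hint : ∫ t in (0:ℝ)..1, (‖g t‖ + C) = (∫ t in (0:ℝ)..1, ‖g t‖) + C := by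
    rw [intervalIntegral.integral_add (hgc.norm.intervalIntegrable _ _)
      intervalIntegrable_const]
    simp
  have hmono : ∫ t in (0:ℝ)..1, ‖g 0‖ ≤ ∫ t in (0:ℝ)..1, (‖g t‖ + C) := by
    apply intervalIntegral.integral_mono_on zero_le_one intervalIntegrable_const
      ((hgc.norm.add continuous_const).intervalIntegrable _ _)
    intro t ht; exact key t ht
  have hconst : ∫ t in (0:ℝ)..1, ‖g 0‖ = ‖g 0‖ := by simp
  rw [← hg0]
  calc ‖g 0‖ = ∫ t in (0:ℝ)..1, ‖g 0‖ := hconst.symm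
    _ ≤ (∫ t in (0:ℝ)..1, ‖g t‖) + C := by rw [← hint]; exact hmono

/-! ### iterated lower integrals over unit boxes -/

def ITL {N : ℕ} : List (Fin N) → (Euc N → ℝ≥0∞) → Euc N → ℝ≥0∞
  | [], v => v
  | i :: l, v => fun x => ∫⁻ t in Set.Ioc (0:ℝ) 1, ITL l v (x + t • sE i)

@[simp] lemma ITL_nil (v : Euc N → ℝ≥0∞) : ITL [] v = v := rfl

lemma ITL_cons (i : Fin N) (l : List (Fin N)) (v : Euc N → ℝ≥0∞) (x : Euc N) :
    ITL (i :: l) v x = ∫⁻ t in Set.Ioc (0:ℝ) 1, ITL l v (x + t • sE i) := rfl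

lemma ITL_measurable {v : Euc N → ℝ≥0∞} (hv : Measurable v) :
    ∀ l : List (Fin N), Measurable (ITL l v)
  | [] => hv
  | i :: l => by
    have hc : Continuous (fun q : Euc N × ℝ => q.1 + q.2 • sE i) :=
      continuous_fst.add (continuous_snd.smul continuous_const)
    have h1 : Measurable (fun q : Euc N × ℝ => ITL l v (q.1 + q.2 • sE i)) :=
      (ITL_measurable hv l).comp hc.measurable
    exact Measurable.lintegral_prod_right' (f := fun q : Euc N × ℝ => ITL l v (q.1 + q.2 • sE i)) h1

lemma coordAdd (x : Euc N) (t : ℝ) (i j : Fin N) :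
    (x + t • sE i) j = if j = i then x j + t else x j := by
  have : (x + t • sE i) j = x j + t * (sE i) j := rfl
  rw [this]
  unfold sE
  rw [EuclideanSpace.single_apply]
  by_cases h : j = i <;> simp [h]

lemma ITL_le {v₁ v₂ : Euc N → ℝ≥0∞} :
    ∀ (l : List (Fin N)) (x : Euc N),
      (∀ y : Euc N, (∀ i, x i ≤ y i ∧ y i ≤ x i + l.length) → v₁ y ≤ v₂ y) →
      ITL l v₁ x ≤ ITL l v₂ x
  | [], x, h => h x (fun i => ⟨le_rfl, by simp⟩)
  | i :: l, x, h => by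
    rw [ITL_cons, ITL_cons]
    refine setLIntegral_mono' measurableSet_Ioc fun t ht => ?_
    refine ITL_le l _ fun y hy => h y fun j => ?_
    rcases hy j with ⟨h1, h2⟩
    rw [coordAdd] at h1 h2
    by_cases hj : j = i
    · rw [if_pos hj] at h1 h2
      refine ⟨by linarith [ht.1], ?_⟩
      have : ((i :: l).length : ℝ) = (l.length : ℝ) + 1 := by push_cast [List.length_cons]; ring
      rw [this]; linarith [ht.2]
    · rw [if_neg hj] at h1 h2
      have : ((i :: l).length : ℝ) = (l.length : ℝ) + 1 := by push_cast [List.length_cons]; ring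
      refine ⟨h1, by rw [this]; linarith⟩

lemma ITL_const_mul (c : ℝ≥0∞) (hc : c ≠ ⊤) (v : Euc N → ℝ≥0∞) :
    ∀ (l : List (Fin N)) (x : Euc N), ITL l (fun y => c * v y) x = c * ITL l v x
  | [], x => rfl
  | i :: l, x => by
    rw [ITL_cons, ITL_cons, ← lintegral_const_mul' _ _ hc]
    exact lintegral_congr fun t => ITL_const_mul c hc v l _

lemma ITL_mono {v₁ v₂ : Euc N → ℝ≥0∞} (h : ∀ y, v₁ y ≤ v₂ y) :
    ∀ (l : List (Fin N)) (x : Euc N), ITL l v₁ x ≤ ITL l v₂ x := fun l x =>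
  ITL_le l x (fun y _ => h y)

/-! ### Morrey-type pointwise bound -/

def SL {N : ℕ} : List (Fin N) → List (List (Fin N))
  | [] => [[]]
  | i :: l => SL l ++ (SL l).map (fun s => s ++ [i])

lemma SL_length_pos : ∀ l : List (Fin N), 0 < (SL l).length
  | [] => one_pos
  | i :: l => by
    simp only [SL, List.length_append]
    exact Nat.lt_of_lt_of_le (SL_length_pos l) (Nat.le_add_right _ _)

lemma SL_mem_length {s : List (Fin N)} : ∀ {l : List (Fin N)}, s ∈ SL l → s.length ≤ l.length := by
  intro l
  induction l generalizing s with
  | nil => intro hs; simp [SL] at hs; simp [hs]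
  | cons i l ih =>
    intro hs
    simp only [SL, List.mem_append, List.mem_map] at hs
    rcases hs with hs | ⟨t, ht, rfl⟩
    · exact le_trans (ih hs) (Nat.le_succ _)
    · simp only [List.length_append, List.length_cons, List.length_singleton]
      exact Nat.add_le_add (ih ht) le_rfl

lemma lint_list_sum {ι : Type*} (μ : Measure ℝ) (L : List ι) (F : ι → ℝ → ℝ≥0∞)
    (hF : ∀ j ∈ L, Measurable (F j)) :
    ∫⁻ t, (L.map (fun s => F s t)).sum ∂μ = (L.map (fun s => ∫⁻ t, F s t ∂μ)).sum := by
  induction L with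
  | nil => simp
  | cons a L ih =>
    simp only [List.map_cons, List.sum_cons]
    rw [lintegral_add_left (hF a List.mem_cons_self),
      ih (fun j hj => hF j (List.mem_cons_of_mem a hj))]

lemma morrey {h : Euc N → ℂ} (hh : Sm h) :
    ∀ (l : List (Fin N)) (x : Euc N),
      ENNReal.ofReal ‖h x‖
        ≤ ((SL l).map (fun s => ITL l (fun y => ENNReal.ofReal ‖pdL s h y‖) x)).sum := by
  intro l
  induction l generalizing h with
  | nil => intro x; simp [SL]
  | cons i l ih =>
    intro x
    have h1 := oneD hh i x
    have hIa : IntervalIntegrable (fun t => ‖h (x + t • sE i)‖) volume 0 1 :=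
      ((line_cont hh.continuous x (sE i)).norm).intervalIntegrable _ _
    have hIb : IntervalIntegrable (fun t => ‖pd i h (x + t • sE i)‖) volume 0 1 :=
      ((line_cont (pd_smooth hh i).continuous x (sE i)).norm).intervalIntegrable _ _
    have hna : 0 ≤ ∫ t in (0:ℝ)..1, ‖h (x + t • sE i)‖ :=
      intervalIntegral.integral_nonneg zero_le_one (fun t _ => norm_nonneg _)
    -- pass to ℝ≥0∞
    have h2 : ENNReal.ofReal ‖h x‖
        ≤ ENNReal.ofReal (∫ t in (0:ℝ)..1, ‖h (x + t • sE i)‖)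
          + ENNReal.ofReal (∫ t in (0:ℝ)..1, ‖pd i h (x + t • sE i)‖) := by
      rw [← ENNReal.ofReal_add hna (intervalIntegral.integral_nonneg zero_le_one
        (fun t _ => norm_nonneg _))]
      exact ENNReal.ofReal_le_ofReal h1
    have conv : ∀ (u : Euc N → ℂ), Continuous u →
        ENNReal.ofReal (∫ t in (0:ℝ)..1, ‖u (x + t • sE i)‖)
          = ∫⁻ t in Set.Ioc (0:ℝ) 1, ENNReal.ofReal ‖u (x + t • sE i)‖ := by
      intro u hu
      rw [intervalIntegral.integral_of_le zero_le_one]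
      exact MeasureTheory.ofReal_integral_eq_lintegral_ofReal
        (((line_cont hu x (sE i)).norm).integrableOn_Ioc)
        (Filter.Eventually.of_forall fun t => norm_nonneg _)
    rw [conv h hh.continuous, conv (pd i h) (pd_smooth hh i).continuous] at h2
    -- apply IH inside the two integrals
    have h3 : (∫⁻ t in Set.Ioc (0:ℝ) 1, ENNReal.ofReal ‖h (x + t • sE i)‖)
        ≤ ((SL l).map (fun s => ITL (i :: l) (fun y => ENNReal.ofReal ‖pdL s h y‖) x)).sum := by
      calc (∫⁻ t in Set.Ioc (0:ℝ) 1, ENNReal.ofReal ‖h (x + t • sE i)‖)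
          ≤ ∫⁻ t in Set.Ioc (0:ℝ) 1,
              ((SL l).map (fun s => ITL l (fun y => ENNReal.ofReal ‖pdL s h y‖)
                (x + t • sE i))).sum := lintegral_mono fun t => ih hh _
        _ = _ := by
          rw [lint_list_sum _ (SL l)
            (fun s t => ITL l (fun y => ENNReal.ofReal ‖pdL s h y‖) (x + t • sE i))
            (fun s _ => (ITL_measurable
              ((ENNReal.measurable_ofReal).comp (pdL_smooth hh s).continuous.norm.measurable)
              l).comp (continuous_const.add (continuous_id.smul continuous_const)).measurable)]
          rfl
    have h4 : (∫⁻ t in Set.Ioc (0:ℝ) 1, ENNReal.ofReal ‖pd i h (x + t • sE i)‖)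
        ≤ (((SL l).map (fun s => s ++ [i])).map
            (fun s => ITL (i :: l) (fun y => ENNReal.ofReal ‖pdL s h y‖) x)).sum := by
      have hpd : Sm (pd i h) := pd_smooth hh i
      calc (∫⁻ t in Set.Ioc (0:ℝ) 1, ENNReal.ofReal ‖pd i h (x + t • sE i)‖)
          ≤ ∫⁻ t in Set.Ioc (0:ℝ) 1,
              ((SL l).map (fun s => ITL l (fun y => ENNReal.ofReal ‖pdL s (pd i h) y‖)
                (x + t • sE i))).sum := lintegral_mono fun t => ih hpd _
        _ = ((SL l).map (fun s => ITL (i :: l)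
              (fun y => ENNReal.ofReal ‖pdL s (pd i h) y‖) x)).sum := by
          rw [lint_list_sum _ (SL l)
            (fun s t => ITL l (fun y => ENNReal.ofReal ‖pdL s (pd i h) y‖) (x + t • sE i))
            (fun s _ => (ITL_measurable
              ((ENNReal.measurable_ofReal).comp (pdL_smooth hpd s).continuous.norm.measurable)
              l).comp (continuous_const.add (continuous_id.smul continuous_const)).measurable)]
          rfl
        _ = _ := by
          rw [List.map_map]
          congr 1
          apply List.map_congr_left
          intro s _
          have : pdL (s ++ [i]) h = pdL s (pd i h) := by rw [pdL_append]; rfl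
          simp [Function.comp, this]
    calc ENNReal.ofReal ‖h x‖ ≤ _ := h2
      _ ≤ ((SL l).map (fun s => ITL (i :: l) (fun y => ENNReal.ofReal ‖pdL s h y‖) x)).sum
          + (((SL l).map (fun s => s ++ [i])).map
            (fun s => ITL (i :: l) (fun y => ENNReal.ofReal ‖pdL s h y‖) x)).sum :=
        add_le_add h3 h4
      _ = _ := by
        show _ = ((SL (i :: l)).map _).sum
        rw [SL, List.map_append, List.sum_append]

/-! ### Jensen and Tonelli–Hölder -/

lemma JEN {p : ℝ} (hp : 1 ≤ p) {h : ℝ → ℝ≥0∞} (hh : Measurable h) :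
    ∫⁻ t in Set.Ioc (0:ℝ) 1, (h t) ^ (1/p) ≤ (∫⁻ t in Set.Ioc (0:ℝ) 1, h t) ^ (1/p) := by
  rcases eq_or_lt_of_le hp with heq | hlt
  · simp [← heq]
  · have hpq : p.HolderConjugate (p / (p - 1)) := Real.HolderConjugate.conjExponent hlt
    have hmeas : AEMeasurable (fun t => (h t) ^ (1/p)) (volume.restrict (Set.Ioc (0:ℝ) 1)) :=
      (hh.pow_const _).aemeasurable
    have H := ENNReal.lintegral_mul_le_Lp_mul_Lq (volume.restrict (Set.Ioc (0:ℝ) 1)) hpq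
      hmeas aemeasurable_const (g := fun _ => 1)
    have hp0 : p ≠ 0 := by positivity
    simp only [mul_one, Pi.mul_apply] at H
    calc ∫⁻ t in Set.Ioc (0:ℝ) 1, (h t) ^ (1/p)
        = ∫⁻ t in Set.Ioc (0:ℝ) 1, (h t) ^ (1/p) * 1 := by simp
      _ ≤ (∫⁻ t in Set.Ioc (0:ℝ) 1, ((h t) ^ (1/p)) ^ p) ^ (1/p)
          * (∫⁻ _t in Set.Ioc (0:ℝ) 1, (1:ℝ≥0∞) ^ (p/(p-1))) ^ (1/(p/(p-1))) := by
        simpa using H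
      _ = (∫⁻ t in Set.Ioc (0:ℝ) 1, h t) ^ (1/p) := by
        have h1 : ∀ t, ((h t) ^ (1/p)) ^ p = h t := by
          intro t
          rw [← ENNReal.rpow_mul, one_div, inv_mul_cancel₀ hp0, ENNReal.rpow_one]
        simp only [h1, ENNReal.one_rpow]
        rw [setLIntegral_one, Real.volume_Ioc]
        norm_num
lemma toPi_add (x : Euc N) (t : ℝ) (i : Fin N) :
    (fun j => (x + t • sE i) j) = Function.update (fun j => x j) i (x i + t) := by
  funext j
  rw [coordAdd]
  by_cases h : j = i
  · subst h; simp [Function.update]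
  · simp [Function.update, h]

lemma KEY {p : ℝ} (hp : 1 ≤ p) {u : Euc N → ℝ≥0∞} (hu : Measurable u) :
    ∀ (l : List (Fin N)), l.Nodup → ∀ x : Euc N,
      ITL l u x ≤ ((∫⋯∫⁻_l.toFinset,
          (fun y : Fin N → ℝ => (u ((WithLp.equiv 2 (Fin N → ℝ)).symm y)) ^ p)
          ∂(fun _ : Fin N => (volume : Measure ℝ))) (fun j => x j)) ^ (1/p) := by
  have hp0 : p ≠ 0 := by positivity
  have hofPi : Continuous (fun y : Fin N → ℝ => ((WithLp.equiv 2 (Fin N → ℝ)).symm y : Euc N)) :=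
    PiLp.continuous_toLp 2 (fun _ : Fin N => ℝ)
  have hU : Measurable (fun y : Fin N → ℝ =>
      (u ((WithLp.equiv 2 (Fin N → ℝ)).symm y)) ^ p) :=
    (hu.comp hofPi.measurable).pow_const _
  intro l
  induction l with
  | nil =>
    intro _ x
    rw [List.toFinset_nil, MeasureTheory.lmarginal_empty, ITL_nil]
    have : ((WithLp.equiv 2 (Fin N → ℝ)).symm (fun j => x j) : Euc N) = x := rfl
    rw [this, ← ENNReal.rpow_mul, mul_one_div_cancel hp0, ENNReal.rpow_one]
  | cons i l ih =>
    intro hnd x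
    have hil : i ∉ l := (List.nodup_cons.mp hnd).1
    have hndl : l.Nodup := (List.nodup_cons.mp hnd).2
    rw [ITL_cons]
    set G : (Fin N → ℝ) → ℝ≥0∞ := (∫⋯∫⁻_l.toFinset,
        (fun y : Fin N → ℝ => (u ((WithLp.equiv 2 (Fin N → ℝ)).symm y)) ^ p)
        ∂(fun _ : Fin N => (volume : Measure ℝ))) with hG
    have hGmeas : Measurable G := Measurable.lmarginal _ hU
    calc (∫⁻ t in Set.Ioc (0:ℝ) 1, ITL l u (x + t • sE i))
        ≤ ∫⁻ t in Set.Ioc (0:ℝ) 1, (G (fun j => (x + t • sE i) j)) ^ (1/p) :=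
          lintegral_mono fun t => ih hndl (x + t • sE i)
      _ ≤ (∫⁻ t in Set.Ioc (0:ℝ) 1, G (fun j => (x + t • sE i) j)) ^ (1/p) := by
          apply JEN hp
          exact hGmeas.comp (by
            have : Continuous (fun t : ℝ => (fun j => (x + t • sE i) j)) := by
              apply continuous_pi
              intro j
              simp only [coordAdd]
              by_cases h : j = i <;> simp [h] <;> continuity
            exact this.measurable)
      _ ≤ (∫⁻ t : ℝ, G (fun j => (x + t • sE i) j)) ^ (1/p) :=
          ENNReal.rpow_le_rpow (setLIntegral_le_lintegral _ _) (by positivity)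
      _ = (∫⁻ r : ℝ, G (Function.update (fun j => x j) i r)) ^ (1/p) := by
          congr 1
          simp only [toPi_add]
          have hH : Measurable (fun r : ℝ => G (Function.update (fun j => x j) i r)) :=
            hGmeas.comp (measurable_update _)
          calc ∫⁻ t : ℝ, G (Function.update (fun j => x j) i (x i + t))
              = ∫⁻ t : ℝ, (fun r => G (Function.update (fun j => x j) i r)) (x i + t) := rfl
            _ = ∫⁻ r : ℝ, G (Function.update (fun j => x j) i r) :=
              (measurePreserving_add_left volume (x i)).lintegral_comp hH
      _ = _ := by
          rw [List.toFinset_cons]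
          rw [MeasureTheory.lmarginal_insert _ hU (by simp [hil])]

lemma KEY2 {p : ℝ} (hp : 1 ≤ p) {u : Euc N → ℝ≥0∞} (hu : Measurable u) (x : Euc N) :
    ITL (List.finRange N) u x ≤ (∫⁻ z : Euc N, (u z) ^ p) ^ (1/p) := by
  refine le_trans (KEY hp hu (List.finRange N) (List.nodup_finRange N) x) ?_
  have h1 : (List.finRange N).toFinset = (Finset.univ : Finset (Fin N)) :=
    List.toFinset_finRange N
  rw [h1, MeasureTheory.lmarginal_univ]
  have h2 : ∫⁻ y : Fin N → ℝ,
        (u ((WithLp.equiv 2 (Fin N → ℝ)).symm y)) ^ p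
        ∂(Measure.pi fun _ : Fin N => (volume : Measure ℝ))
      = ∫⁻ z : Euc N, (u z) ^ p := by
    rw [← MeasureTheory.volume_pi]
    have hmp : MeasurePreserving (MeasurableEquiv.toLp 2 (Fin N → ℝ))
        (volume : Measure (Fin N → ℝ)) (volume : Measure (Euc N)) :=
      (EuclideanSpace.volume_preserving_symm_measurableEquiv_toLp (Fin N)).symm
    have := hmp.lintegral_comp (f := fun z : Euc N => (u z) ^ p) (hu.pow_const _)
    rw [← this]
    apply lintegral_congr
    intro y
    congr 1
  rw [h2]

/-! ### properties of the Young conjugate -/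

section Phi
variable {ω : ℝ → ℝ}

def Bset (ω : ℝ → ℝ) (s : ℝ) : Set ℝ := {y | ∃ t ≥ 0, y = s * t - ω (Real.exp t)}

lemma phiStar_eq_sSup (ω : ℝ → ℝ) (s : ℝ) : phiStar ω s = sSup (Bset ω s) := rfl

lemma zero_mem_Bset (hω : IsWeightFun ω) (s : ℝ) : (0:ℝ) ∈ Bset ω s :=
  ⟨0, le_rfl, by simp [hω.vanish 1 (by norm_num)]⟩

lemma phiStar_nonneg (hω : IsWeightFun ω) (s : ℝ) : 0 ≤ phiStar ω s := by
  rw [phiStar_eq_sSup]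
  by_cases hb : BddAbove (Bset ω s)
  · exact le_csSup hb (zero_mem_Bset hω s)
  · rw [Real.sSup_of_not_bddAbove hb]

lemma unbdd_mono (hss' : ∀ s' ≥ (0:ℝ), True) {s s' : ℝ} (h : s ≤ s')
    (hb : ¬ BddAbove (Bset ω s)) : ¬ BddAbove (Bset ω s') := by
  intro hb'
  apply hb
  rcases hb' with ⟨M, hM⟩
  refine ⟨M, fun y hy => ?_⟩
  rcases hy with ⟨t, ht, rfl⟩
  have : s * t - ω (Real.exp t) ≤ s' * t - ω (Real.exp t) := by nlinarith
  exact le_trans this (hM ⟨t, ht, rfl⟩)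

lemma PHI (hω : IsWeightFun ω) (m Nn : ℕ) (hm : 0 < m) :
    ∃ D : ℝ, 0 ≤ D ∧ ∀ k j : ℕ, j ≤ Nn →
      2*(m:ℝ) * phiStar ω (((k:ℝ)+(j:ℝ))/(2*(m:ℝ)))
        ≤ (m:ℝ) * phiStar ω ((k:ℝ)/(m:ℝ)) + D := by
  have hm0 : (0:ℝ) < m := by exact_mod_cast hm
  by_cases hgood : ∀ s : ℝ, BddAbove (Bset ω s)
  · refine ⟨(m:ℝ) * ∑ j ∈ Finset.range (Nn+1), phiStar ω ((j:ℝ)/(m:ℝ)), ?_, ?_⟩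
    · apply mul_nonneg hm0.le
      exact Finset.sum_nonneg fun j _ => phiStar_nonneg hω _
    · intro k j hj
      have hconv : phiStar ω (((k:ℝ)+(j:ℝ))/(2*(m:ℝ)))
          ≤ (1/2) * phiStar ω ((k:ℝ)/(m:ℝ)) + (1/2) * phiStar ω ((j:ℝ)/(m:ℝ)) := by
        rw [phiStar_eq_sSup]
        apply Real.sSup_le
        · rintro y ⟨t, ht, rfl⟩
          have h1 : ((k:ℝ)/(m:ℝ)) * t - ω (Real.exp t) ≤ phiStar ω ((k:ℝ)/(m:ℝ)) :=
            le_csSup (hgood _) ⟨t, ht, rfl⟩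
          have h2 : ((j:ℝ)/(m:ℝ)) * t - ω (Real.exp t) ≤ phiStar ω ((j:ℝ)/(m:ℝ)) :=
            le_csSup (hgood _) ⟨t, ht, rfl⟩
          have heq : (((k:ℝ)+(j:ℝ))/(2*(m:ℝ))) * t - ω (Real.exp t)
              = (1/2) * (((k:ℝ)/(m:ℝ)) * t - ω (Real.exp t))
                + (1/2) * (((j:ℝ)/(m:ℝ)) * t - ω (Real.exp t)) := by
            field_simp
            ring
          rw [heq]
          linarith
        · have := phiStar_nonneg hω ((k:ℝ)/(m:ℝ))
          have := phiStar_nonneg hω ((j:ℝ)/(m:ℝ))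
          linarith
      have hsum : phiStar ω ((j:ℝ)/(m:ℝ))
          ≤ ∑ j ∈ Finset.range (Nn+1), phiStar ω ((j:ℝ)/(m:ℝ)) :=
        Finset.single_le_sum (f := fun i : ℕ => phiStar ω ((i:ℝ)/(m:ℝ)))
          (fun i _ => phiStar_nonneg hω _)
          (Finset.mem_range.mpr (Nat.lt_succ_of_le hj))
      nlinarith [phiStar_nonneg hω ((k:ℝ)/(m:ℝ))]
  · push_neg at hgood
    obtain ⟨s₀, hs₀⟩ := hgood
    set s₁ : ℝ := max s₀ 0 with hs₁
    have hbs₁ : ¬ BddAbove (Bset ω s₁) := unbdd_mono (fun _ _ => trivial) (le_max_left _ _) hs₀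
    set T : ℕ := ⌈2*(m:ℝ)*s₁⌉₊ with hT
    refine ⟨2*(m:ℝ) * ∑ i ∈ Finset.range (T+Nn+1), phiStar ω ((i:ℝ)/(2*(m:ℝ))), ?_, ?_⟩
    · apply mul_nonneg (by positivity)
      exact Finset.sum_nonneg fun i _ => phiStar_nonneg hω _
    · intro k j hj
      rcases le_or_gt s₁ (((k:ℝ)+(j:ℝ))/(2*(m:ℝ))) with hc | hc
      · have : ¬ BddAbove (Bset ω (((k:ℝ)+(j:ℝ))/(2*(m:ℝ)))) :=
          unbdd_mono (fun _ _ => trivial) hc hbs₁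
        rw [phiStar_eq_sSup, Real.sSup_of_not_bddAbove this]
        have h1 : 0 ≤ (m:ℝ) * phiStar ω ((k:ℝ)/(m:ℝ)) :=
          mul_nonneg hm0.le (phiStar_nonneg hω _)
        have h2 : 0 ≤ 2*(m:ℝ) * ∑ i ∈ Finset.range (T+Nn+1), phiStar ω ((i:ℝ)/(2*(m:ℝ))) := by
          apply mul_nonneg (by positivity)
          exact Finset.sum_nonneg fun i _ => phiStar_nonneg hω _
        linarith
      · have hkj : ((k:ℝ)+(j:ℝ)) < 2*(m:ℝ)*s₁ := by
          rw [div_lt_iff₀ (by positivity)] at hc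
          linarith
        have hkjT : k + j < T + Nn + 1 := by
          have h1 : ((k+j:ℕ):ℝ) < (T:ℝ) := lt_of_lt_of_le (by push_cast; linarith) (Nat.le_ceil _)
          have : k + j < T := by exact_mod_cast h1
          omega
        have hmem : phiStar ω (((k:ℝ)+(j:ℝ))/(2*(m:ℝ)))
            ≤ ∑ i ∈ Finset.range (T+Nn+1), phiStar ω ((i:ℝ)/(2*(m:ℝ))) := by
          have : (((k:ℝ)+(j:ℝ))/(2*(m:ℝ))) = (((k+j:ℕ):ℝ)/(2*(m:ℝ))) := by push_cast; ring
          rw [this]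
          exact Finset.single_le_sum (f := fun i : ℕ => phiStar ω ((i:ℝ)/(2*(m:ℝ))))
            (fun i _ => phiStar_nonneg hω _)
            (Finset.mem_range.mpr hkjT)
        nlinarith [phiStar_nonneg hω ((k:ℝ)/(m:ℝ))]

/-! ### growth transfer for the weight -/

lemma ITER (hω : IsWeightFun ω) {K : ℝ} (hK : 1 ≤ K)
    (hKa : ∀ t ≥ (0:ℝ), ω (2*t) ≤ K * (1 + ω t)) :
    ∀ (j : ℕ) (t : ℝ), 0 ≤ t → ω ((2:ℝ)^j * t) ≤ K^j * ω t + j * K^j := by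
  intro j
  induction j with
  | zero => intro t ht; simp
  | succ j ih =>
    intro t ht
    have h2t : (0:ℝ) ≤ 2*t := by linarith
    have hKj : (0:ℝ) < K^j := by positivity
    have h1 : ω ((2:ℝ)^(j+1) * t) = ω ((2:ℝ)^j * (2*t)) := by ring_nf
    have h2 := ih (2*t) h2t
    have h3 := hKa t ht
    have h4 : K^j * ω (2*t) ≤ K^j * (K * (1 + ω t)) := by nlinarith
    have h5 : K^j ≤ K^(j+1) := by
      rw [pow_succ]
      nlinarith
    rw [h1]
    calc ω ((2:ℝ)^j * (2*t)) ≤ K^j * ω (2*t) + j * K^j := h2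
      _ ≤ K^j * (K * (1 + ω t)) + j * K^j := by linarith
      _ = K^(j+1) * ω t + K^(j+1) + j * K^j := by rw [pow_succ]; ring
      _ ≤ K^(j+1) * ω t + (j+1) * K^(j+1) := by
          have : (j:ℝ) * K^j ≤ (j:ℝ) * K^(j+1) := by
            apply mul_le_mul_of_nonneg_left h5 (by positivity)
          push_cast
          nlinarith
      _ = K^(j+1) * ω t + (↑(j+1)) * K^(j+1) := by push_cast; ring

lemma OMEGA (hω : IsWeightFun ω) (n Nn : ℕ) (hn : 0 < n) :
    ∃ c₀ : ℝ, 0 ≤ c₀ ∧ ∃ n' : ℕ, n ≤ n' ∧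
      ∀ x : ℝ, 0 ≤ x → (n:ℝ) * ω (x + ((Nn:ℝ)^2+1)) ≤ c₀ + (n':ℝ) * ω x := by
  obtain ⟨K, hK1, hKa⟩ := hω.alpha
  set ρ : ℝ := (Nn:ℝ)^2+1 with hρ
  set j : ℕ := Nn^2+2 with hj
  have hρ1 : ρ + 1 ≤ (2:ℝ)^j := by
    have h1 : (j:ℝ) + 1 ≤ (2:ℝ)^j := by
      have := Nat.lt_two_pow_self (n := j)
      have h2 : (j+1 : ℕ) ≤ 2^j := this
      calc (j:ℝ) + 1 = ((j+1 : ℕ):ℝ) := by push_cast; ring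
        _ ≤ ((2^j : ℕ):ℝ) := by exact_mod_cast h2
        _ = (2:ℝ)^j := by push_cast; ring
    have h2 : ρ + 1 ≤ (j:ℝ) + 1 := by
      rw [hρ, hj]; push_cast; nlinarith
    linarith
  have hKj : (0:ℝ) < K^j := by positivity
  have hITER := ITER hω hK1 hKa j
  refine ⟨(n:ℝ) * (j * K^j), by positivity, n * ⌈K^j⌉₊, ?_, ?_⟩
  · have h1 : 1 ≤ ⌈K^j⌉₊ := by
      rw [Nat.one_le_iff_ne_zero, ← Nat.pos_iff_ne_zero, Nat.ceil_pos]
      exact hKj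
    calc n = n * 1 := (mul_one n).symm
      _ ≤ n * ⌈K^j⌉₊ := Nat.mul_le_mul_left n h1
  · intro x hx
    have hω1 : ω 1 = 0 := hω.vanish 1 (by norm_num)
    have hρ0 : (0:ℝ) ≤ ρ := by rw [hρ]; positivity
    have hmono := hω.mono
    have hwnn := hω.nonneg
    have hjK : ω ((2:ℝ)^j) ≤ (j:ℝ) * K^j := by
      have := hITER 1 zero_le_one
      rw [mul_one, hω1] at this
      linarith
    have hcKj : (K^j : ℝ) ≤ (⌈K^j⌉₊ : ℝ) := Nat.le_ceil _
    rcases le_or_gt x 1 with hx1 | hx1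
    · have h1 : ω (x + ρ) ≤ ω ((2:ℝ)^j) := by
        apply hmono (Set.mem_Ici.mpr (by linarith)) (Set.mem_Ici.mpr (by positivity))
        linarith
      have h2 : (n:ℝ) * ω (x + ρ) ≤ (n:ℝ) * ((j:ℝ) * K^j) := by
        have hnn : 0 ≤ ω (x+ρ) := hwnn _ (by linarith)
        have : ω (x + ρ) ≤ (j:ℝ) * K^j := le_trans h1 hjK
        nlinarith [(Nat.cast_pos (α := ℝ)).mpr hn]
      have h3 : 0 ≤ ((n * ⌈K^j⌉₊ : ℕ):ℝ) * ω x := by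
        apply mul_nonneg (by positivity) (hwnn x hx)
      linarith
    · have h1 : ω (x + ρ) ≤ ω ((2:ℝ)^j * x) := by
        apply hmono (Set.mem_Ici.mpr (by linarith)) (Set.mem_Ici.mpr (by positivity))
        nlinarith
      have h2 := hITER x hx
      have h3 : (n:ℝ) * ω (x + ρ) ≤ (n:ℝ) * (K^j * ω x + j * K^j) := by
        have := le_trans h1 h2
        nlinarith [(Nat.cast_pos (α := ℝ)).mpr hn]
      have h5 : (n:ℝ) * ω (x + ρ) ≤ (n:ℝ) * K^j * ω x + (n:ℝ) * ((j:ℝ) * K^j) := by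
        nlinarith
      have h6 : (n:ℝ) * K^j * ω x ≤ ((n * ⌈K^j⌉₊ : ℕ):ℝ) * ω x := by
        have hωx : 0 ≤ ω x := hwnn x hx
        push_cast
        nlinarith [mul_nonneg (mul_nonneg (Nat.cast_nonneg (α := ℝ) n)
          (sub_nonneg.mpr hcKj)) hωx]
      linarith
end Phi

/-! ### glue lemmas -/

lemma list_sum_mul {ι : Type*} (L : List ι) (F : ι → ℝ≥0∞) (c : ℝ≥0∞) :
    (L.map F).sum * c = (L.map (fun s => F s * c)).sum := by
  induction L with
  | nil => simp
  | cons a L ih => simp only [List.map_cons, List.sum_cons, add_mul, ih]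

lemma mul_list_sum {ι : Type*} (L : List ι) (F : ι → ℝ≥0∞) (c : ℝ≥0∞) :
    c * (L.map F).sum = (L.map (fun s => c * F s)).sum := by
  induction L with
  | nil => simp
  | cons a L ih => simp only [List.map_cons, List.sum_cons, mul_add, ih]

lemma norm_le_of_box {x y : Euc N} (h : ∀ i, x i ≤ y i ∧ y i ≤ x i + (N:ℝ)) :
    ‖y‖ ≤ ‖x‖ + ((N:ℝ)^2+1) := by
  have h1 : ‖y - x‖ ≤ (N:ℝ)^2 + 1 := by
    rw [EuclideanSpace.norm_eq]
    have hb : ∑ i, ‖(y - x) i‖^2 ≤ (((N:ℝ)^2+1))^2 := by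
      calc ∑ i, ‖(y-x) i‖^2 ≤ ∑ _i : Fin N, (N:ℝ)^2 := by
            apply Finset.sum_le_sum
            intro i _
            have hi1 := (h i).1
            have hi2 := (h i).2
            have habs : ‖(y-x) i‖ ≤ (N:ℝ) := by
              have : (y - x) i = y i - x i := rfl
              rw [this, Real.norm_eq_abs, abs_le]
              constructor <;> linarith
            nlinarith [norm_nonneg ((y-x) i)]
        _ = (N:ℝ) * (N:ℝ)^2 := by
            rw [Finset.sum_const, Finset.card_univ, Fintype.card_fin, nsmul_eq_mul]
        _ ≤ ((N:ℝ)^2+1)^2 := by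
            nlinarith [sq_nonneg ((N:ℝ)^2-(N:ℝ)), pow_nonneg (Nat.cast_nonneg (α := ℝ) N) 3,
              sq_nonneg (N:ℝ)]
    calc Real.sqrt (∑ i, ‖(y - x) i‖^2) ≤ Real.sqrt ((((N:ℝ)^2+1))^2) := Real.sqrt_le_sqrt hb
      _ = (N:ℝ)^2+1 := Real.sqrt_sq (by positivity)
  calc ‖y‖ = ‖x + (y - x)‖ := by rw [add_sub_cancel]
    _ ≤ ‖x‖ + ‖y - x‖ := norm_add_le _ _
    _ ≤ ‖x‖ + ((N:ℝ)^2+1) := by linarith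

lemma wLp_eq_lintegral {p : ℝ} (hp : 1 ≤ p) (w : Euc N → ℝ) (g : Euc N → ℂ) :
    (∫⁻ z : Euc N, (ENNReal.ofReal (Real.exp (w z) * ‖g z‖)) ^ p) ^ (1/p)
      = wLp (ENNReal.ofReal p) w g := by
  have hp0 : (0:ℝ) < p := lt_of_lt_of_le one_pos hp
  rw [wLp, eLpNorm_eq_lintegral_rpow_enorm_toReal
    (by simp only [ne_eq, ENNReal.ofReal_eq_zero, not_le]; linarith) ENNReal.ofReal_ne_top,
    ENNReal.toReal_ofReal hp0.le]
  congr 1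
  apply lintegral_congr
  intro z
  congr 1
  rw [← Real.enorm_eq_ofReal (mul_nonneg (Real.exp_nonneg _) (norm_nonneg _))]

lemma esssup_bound {F : Euc N → ℝ} (hF : ∀ x, 0 ≤ F x) {M : ℝ≥0∞}
    (h : ∀ x, ENNReal.ofReal (F x) ≤ M) :
    eLpNorm F ⊤ (volume : Measure (Euc N)) ≤ M := by
  rw [eLpNorm_exponent_top, eLpNormEssSup]
  refine essSup_le_of_ae_le _ ?_
  apply ae_of_all
  intro x
  calc ((‖F x‖₊ : ℝ≥0∞)) = ENNReal.ofReal (F x) := Real.enorm_eq_ofReal (hF x)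
    _ ≤ M := h x

lemma cont_omega_norm {ω : ℝ → ℝ} (hω : IsWeightFun ω) :
    Continuous (fun y : Euc N => ω ‖y‖) := by
  rw [continuous_iff_continuousAt]
  intro y
  rcases lt_or_ge ‖y‖ 1 with hy | hy
  · have hmem : {z : Euc N | ‖z‖ < 1} ∈ nhds y :=
      (isOpen_lt continuous_norm continuous_const).mem_nhds hy
    have hev : (fun z : Euc N => ω ‖z‖) =ᶠ[nhds y] (fun _ => (0:ℝ)) := by
      filter_upwards [hmem] with z hz
      exact hω.vanish _ ⟨norm_nonneg _, le_of_lt hz⟩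
    exact (continuousAt_congr hev).mpr continuousAt_const
  · have h1 : ContinuousAt ω ‖y‖ :=
      hω.continuous.continuousAt (Ici_mem_nhds (by linarith))
    exact h1.comp continuous_norm.continuousAt
end OmAux

open OmAux in
/-- `O^{2m}_{n,ω,p}(ℝ^N)` embeds continuously into `O^m_{n',ω}(ℝ^N)`. -/
theorem Omnp_embeds_Omn'
    {N : ℕ} (ω : ℝ → ℝ) (hω : IsWeightFun ω)
    (p : ℝ) (hp : 1 ≤ p) (m n : ℕ) (hm : 0 < m) (hn : 0 < n) :
    ∃ n' : ℕ, n ≤ n' ∧ ∃ C' > 0, ∀ f : Euc N → ℂ, ContDiff ℝ (⊤ : ℕ∞) f →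
      rnorm ω (2*m) (n : ℤ) p f < ⊤ →
      (⨆ α : Fin N → ℕ,
        wLp ⊤ (fun x => -((n' : ℝ) * ω ‖x‖)) (mderiv α f) *
          ENNReal.ofReal (Real.exp (-((m : ℝ) * phiStar ω ((msize α : ℝ) / m))))) ≤
        ENNReal.ofReal C' * rnorm ω (2*m) (n : ℤ) p f := by
  classical
  obtain ⟨c₀, hc₀, n', hnn', hOm⟩ := OMEGA hω n N hn
  obtain ⟨D, hD, hPhi⟩ := PHI hω m N hm
  set L : List (Fin N) := List.finRange N with hL
  refine ⟨n', hnn', ((SL L).length : ℝ) * Real.exp (c₀ + D), ?_, fun f hf _hfin => ?_⟩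
  · apply mul_pos _ (Real.exp_pos _)
    exact_mod_cast SL_length_pos L
  have hp0 : (0:ℝ) < p := lt_of_lt_of_le one_pos hp
  have hsm : Sm f := hf.of_le (by simp)
  set R := rnorm ω (2*m) (n : ℤ) p f with hR
  set ρ : ℝ := (N:ℝ)^2 + 1 with hρ
  -- per-multiindex L^p bound coming from finiteness of the tsum
  have hA : ∀ γ : Fin N → ℕ,
      wLp (ENNReal.ofReal p) (fun x => -((n:ℝ) * ω ‖x‖)) (mderiv γ f)
        ≤ R * ENNReal.ofReal (Real.exp (((2*m:ℕ):ℝ) *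
            phiStar ω ((msize γ : ℝ) / ((2*m:ℕ):ℝ)))) := by
    intro γ
    set c : ℝ := ((2*m:ℕ):ℝ) * p * phiStar ω ((msize γ : ℝ) / ((2*m:ℕ):ℝ)) with hcdef
    set X := wLp (ENNReal.ofReal p) (fun x => -((n:ℝ) * ω ‖x‖)) (mderiv γ f) with hX
    have h1 : R ^ p = ∑' α : Fin N → ℕ,
        (wLp (ENNReal.ofReal p) (fun x => -((n:ℝ) * ω ‖x‖)) (mderiv α f)) ^ p *
          ENNReal.ofReal (Real.exp (-(((2*m:ℕ):ℝ) * p *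
            phiStar ω ((msize α : ℝ) / ((2*m:ℕ):ℝ))))) := by
      rw [hR, rnorm, ← ENNReal.rpow_mul, one_div, inv_mul_cancel₀ hp0.ne', ENNReal.rpow_one]
      simp only [Int.cast_natCast]
    have hterm : X ^ p * ENNReal.ofReal (Real.exp (-c)) ≤ R ^ p := by
      rw [h1]
      exact ENNReal.le_tsum γ
    have hXp : X ^ p ≤ R ^ p * ENNReal.ofReal (Real.exp c) := by
      have h2 : X ^ p = X ^ p * ENNReal.ofReal (Real.exp (-c)) * ENNReal.ofReal (Real.exp c) := by
        rw [mul_assoc, ← ENNReal.ofReal_mul (Real.exp_nonneg _), ← Real.exp_add,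
          neg_add_cancel, Real.exp_zero, ENNReal.ofReal_one, mul_one]
      rw [h2]
      exact _root_.mul_le_mul_left hterm _
    have h3 : X = (X ^ p) ^ (1/p) := by
      rw [← ENNReal.rpow_mul, mul_one_div_cancel hp0.ne', ENNReal.rpow_one]
    rw [h3]
    calc (X ^ p) ^ (1/p) ≤ (R ^ p * ENNReal.ofReal (Real.exp c)) ^ (1/p) :=
        ENNReal.rpow_le_rpow hXp (by positivity)
      _ = (R ^ p) ^ (1/p) * (ENNReal.ofReal (Real.exp c)) ^ (1/p) :=
        ENNReal.mul_rpow_of_nonneg _ _ (by positivity)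
      _ = R * ENNReal.ofReal (Real.exp c ^ (1/p)) := by
        rw [← ENNReal.rpow_mul, mul_one_div_cancel hp0.ne', ENNReal.rpow_one,
          ENNReal.ofReal_rpow_of_pos (Real.exp_pos _)]
      _ = R * ENNReal.ofReal (Real.exp (c * (1/p))) := by rw [← Real.exp_mul]
      _ = R * ENNReal.ofReal (Real.exp (((2*m:ℕ):ℝ) *
            phiStar ω ((msize γ : ℝ) / ((2*m:ℕ):ℝ)))) := by
        have hcc : c * (1/p) = ((2*m:ℕ):ℝ) *
            phiStar ω ((msize γ : ℝ) / ((2*m:ℕ):ℝ)) := by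
          rw [hcdef]
          field_simp
        rw [hcc]
  -- pointwise/essSup bound for each α
  have main : ∀ α : Fin N → ℕ,
      wLp ⊤ (fun x => -((n' : ℝ) * ω ‖x‖)) (mderiv α f) *
        ENNReal.ofReal (Real.exp (-((m : ℝ) * phiStar ω ((msize α : ℝ) / m))))
      ≤ ENNReal.ofReal (((SL L).length : ℝ) * Real.exp (c₀ + D)) * R := by
    intro α
    set g := mderiv α f with hg
    have hgsm : Sm g := mderiv_smooth hsm α
    set V : List (Fin N) → Euc N → ℝ≥0∞ :=
      fun s y => ENNReal.ofReal ‖pdL s g y‖ with hV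
    set M : ℝ≥0∞ := ((SL L).map (fun s : List (Fin N) =>
        ENNReal.ofReal (Real.exp c₀) * (R * ENNReal.ofReal (Real.exp (((2*m:ℕ):ℝ) *
          phiStar ω (((msize α + s.length : ℕ) : ℝ) / ((2*m:ℕ):ℝ))))))).sum with hM
    have hpoint : ∀ x₀ : Euc N,
        ENNReal.ofReal (Real.exp (-((n' : ℝ) * ω ‖x₀‖)) * ‖g x₀‖) ≤ M := by
      intro x₀
      have h1 : ENNReal.ofReal ‖g x₀‖ ≤ ((SL L).map (fun s => ITL L (V s) x₀)).sum :=
        morrey hgsm L x₀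
      have h2 : ENNReal.ofReal (Real.exp (-((n' : ℝ) * ω ‖x₀‖)) * ‖g x₀‖)
          = ENNReal.ofReal (Real.exp (-((n' : ℝ) * ω ‖x₀‖))) * ENNReal.ofReal ‖g x₀‖ :=
        ENNReal.ofReal_mul (Real.exp_nonneg _)
      rw [h2, hM]
      calc ENNReal.ofReal (Real.exp (-((n' : ℝ) * ω ‖x₀‖))) * ENNReal.ofReal ‖g x₀‖
          ≤ ENNReal.ofReal (Real.exp (-((n' : ℝ) * ω ‖x₀‖))) *
            ((SL L).map (fun s => ITL L (V s) x₀)).sum := _root_.mul_le_mul_right h1 _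
        _ = ((SL L).map (fun s => ENNReal.ofReal (Real.exp (-((n' : ℝ) * ω ‖x₀‖))) *
            ITL L (V s) x₀)).sum := mul_list_sum _ _ _
        _ ≤ _ := by
          apply List.sum_le_sum
          intro s hs
          set γ : Fin N → ℕ := fun j => α j + s.count j with hγ
          have hpdl : pdL s g = mderiv γ f := pdL_mderiv hsm s α
          set W : Euc N → ℝ≥0∞ :=
            fun y => ENNReal.ofReal (Real.exp (-((n:ℝ) * ω ‖y‖)) * ‖mderiv γ f y‖) with hWdef
          have hWmeas : Measurable W := by
            apply ENNReal.measurable_ofReal.comp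
            apply Measurable.mul
            · exact (Real.continuous_exp.comp
                ((continuous_const.mul (cont_omega_norm hω (N := N))).neg)).measurable
            · exact ((mderiv_smooth hsm γ).continuous).norm.measurable
          have hboxle : ITL L (V s) x₀ ≤ ITL L (fun y =>
              ENNReal.ofReal (Real.exp ((n:ℝ) * ω (‖x₀‖ + ρ))) * W y) x₀ := by
            apply ITL_le
            intro y hy
            have hyN : ∀ i, x₀ i ≤ y i ∧ y i ≤ x₀ i + (N:ℝ) := by
              intro i
              have hyi := hy i
              rwa [hL, List.length_finRange] at hyi
            have hnorm : ‖y‖ ≤ ‖x₀‖ + ρ := by rw [hρ]; exact norm_le_of_box hyN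
            have hval : ‖pdL s g y‖ = Real.exp ((n:ℝ) * ω ‖y‖) *
                (Real.exp (-((n:ℝ) * ω ‖y‖)) * ‖mderiv γ f y‖) := by
              rw [hpdl, ← mul_assoc, ← Real.exp_add, add_neg_cancel, Real.exp_zero, one_mul]
            show ENNReal.ofReal ‖pdL s g y‖ ≤ _
            rw [hval, ENNReal.ofReal_mul (Real.exp_nonneg _)]
            apply _root_.mul_le_mul_left
            apply ENNReal.ofReal_le_ofReal
            apply Real.exp_le_exp.mpr
            have hmono : ω ‖y‖ ≤ ω (‖x₀‖ + ρ) :=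
              hω.mono (Set.mem_Ici.mpr (norm_nonneg _))
                (Set.mem_Ici.mpr (le_trans (norm_nonneg _) hnorm)) hnorm
            have hn0 : (0:ℝ) ≤ n := Nat.cast_nonneg n
            nlinarith
          have hkey : ITL L W x₀
              ≤ wLp (ENNReal.ofReal p) (fun y => -((n:ℝ) * ω ‖y‖)) (mderiv γ f) := by
            calc ITL L W x₀ ≤ (∫⁻ z : Euc N, (W z) ^ p) ^ (1/p) := KEY2 hp hWmeas x₀
              _ = _ := wLp_eq_lintegral hp _ _
          calc ENNReal.ofReal (Real.exp (-((n' : ℝ) * ω ‖x₀‖))) * ITL L (V s) x₀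
              ≤ ENNReal.ofReal (Real.exp (-((n' : ℝ) * ω ‖x₀‖))) *
                (ENNReal.ofReal (Real.exp ((n:ℝ) * ω (‖x₀‖ + ρ))) * ITL L W x₀) := by
                apply _root_.mul_le_mul_right
                calc ITL L (V s) x₀ ≤ _ := hboxle
                  _ = ENNReal.ofReal (Real.exp ((n:ℝ) * ω (‖x₀‖ + ρ))) * ITL L W x₀ :=
                    ITL_const_mul _ ENNReal.ofReal_ne_top W L x₀
            _ = ENNReal.ofReal (Real.exp (-((n' : ℝ) * ω ‖x₀‖) + (n:ℝ) * ω (‖x₀‖ + ρ)))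
                  * ITL L W x₀ := by
                rw [← mul_assoc, ← ENNReal.ofReal_mul (Real.exp_nonneg _), ← Real.exp_add]
            _ ≤ ENNReal.ofReal (Real.exp c₀) * ITL L W x₀ := by
                apply _root_.mul_le_mul_left
                apply ENNReal.ofReal_le_ofReal
                apply Real.exp_le_exp.mpr
                have hom := hOm ‖x₀‖ (norm_nonneg _)
                linarith
            _ ≤ ENNReal.ofReal (Real.exp c₀) * (R * ENNReal.ofReal (Real.exp (((2*m:ℕ):ℝ) *
                  phiStar ω (((msize α + s.length : ℕ) : ℝ) / ((2*m:ℕ):ℝ))))) := by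
                apply _root_.mul_le_mul_right
                have hms : msize γ = msize α + s.length := msize_count s α
                have hfin2 := le_trans hkey (hA γ)
                rwa [hms] at hfin2
    have hess : wLp ⊤ (fun x => -((n' : ℝ) * ω ‖x‖)) g ≤ M := by
      rw [wLp]
      exact esssup_bound (fun x => mul_nonneg (Real.exp_nonneg _) (norm_nonneg _)) hpoint
    calc wLp ⊤ (fun x => -((n' : ℝ) * ω ‖x‖)) g *
          ENNReal.ofReal (Real.exp (-((m : ℝ) * phiStar ω ((msize α : ℝ) / m))))
        ≤ M * ENNReal.ofReal (Real.exp (-((m : ℝ) * phiStar ω ((msize α : ℝ) / m)))) :=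
          _root_.mul_le_mul_left hess _
      _ = ((SL L).map (fun s : List (Fin N) =>
            (ENNReal.ofReal (Real.exp c₀) * (R * ENNReal.ofReal (Real.exp (((2*m:ℕ):ℝ) *
              phiStar ω (((msize α + s.length : ℕ) : ℝ) / ((2*m:ℕ):ℝ)))))) *
            ENNReal.ofReal (Real.exp (-((m : ℝ) * phiStar ω ((msize α : ℝ) / m)))))).sum := by
          rw [hM]; exact list_sum_mul _ _ _
      _ ≤ ((SL L).map (fun _s : List (Fin N) =>
            ENNReal.ofReal (Real.exp (c₀ + D)) * R)).sum := by
          apply List.sum_le_sum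
          intro s hs
          have hjN : s.length ≤ N := by
            have hsl := SL_mem_length hs
            rwa [hL, List.length_finRange] at hsl
          have hphi := hPhi (msize α) s.length hjN
          have harg : (((msize α + s.length : ℕ):ℝ)) / ((2*m:ℕ):ℝ)
              = (((msize α : ℕ):ℝ) + ((s.length:ℕ):ℝ)) / (2*(m:ℝ)) := by push_cast; ring
          have hcoef : ((2*m:ℕ):ℝ) = 2*(m:ℝ) := by push_cast; ring
          calc (ENNReal.ofReal (Real.exp c₀) * (R * ENNReal.ofReal (Real.exp (((2*m:ℕ):ℝ) *
                  phiStar ω (((msize α + s.length : ℕ) : ℝ) / ((2*m:ℕ):ℝ)))))) *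
                ENNReal.ofReal (Real.exp (-((m : ℝ) * phiStar ω ((msize α : ℝ) / m))))
              = (ENNReal.ofReal (Real.exp c₀) * (ENNReal.ofReal (Real.exp (((2*m:ℕ):ℝ) *
                  phiStar ω (((msize α + s.length : ℕ) : ℝ) / ((2*m:ℕ):ℝ)))) *
                ENNReal.ofReal (Real.exp (-((m : ℝ) * phiStar ω ((msize α : ℝ) / m)))))) * R := by
                ring
            _ = (ENNReal.ofReal (Real.exp c₀) * ENNReal.ofReal (Real.exp ((((2*m:ℕ):ℝ) *
                  phiStar ω (((msize α + s.length : ℕ) : ℝ) / ((2*m:ℕ):ℝ))) +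
                  (-((m : ℝ) * phiStar ω ((msize α : ℝ) / m)))))) * R := by
                rw [← ENNReal.ofReal_mul (Real.exp_nonneg _), ← Real.exp_add]
            _ ≤ (ENNReal.ofReal (Real.exp c₀) * ENNReal.ofReal (Real.exp D)) * R := by
                apply _root_.mul_le_mul_left
                apply _root_.mul_le_mul_right
                apply ENNReal.ofReal_le_ofReal
                apply Real.exp_le_exp.mpr
                rw [harg, hcoef]
                linarith
            _ = ENNReal.ofReal (Real.exp (c₀ + D)) * R := by
                rw [← ENNReal.ofReal_mul (Real.exp_nonneg _), ← Real.exp_add]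
      _ = (SL L).length • (ENNReal.ofReal (Real.exp (c₀ + D)) * R) := by
          rw [List.map_const', List.sum_replicate]
      _ = ENNReal.ofReal (((SL L).length : ℝ) * Real.exp (c₀ + D)) * R := by
          rw [nsmul_eq_mul, ENNReal.ofReal_mul (Nat.cast_nonneg _), ← mul_assoc,
            ENNReal.ofReal_natCast]
  exact iSup_le main
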